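/- arXiv:1306.1191 — 2 statements merged into one kernel-verified Lean document; each statement's English description precedes it below -/
import Mathlib

section
/- For a smooth function f : B_ℓ(x) ⊂ ℝ^m → ℝ^n with convolution f * ρ_ℓ defined at x, one has (f*ρ_ℓ)(x) − f(x) = ∫ Df(x − w) · Υ(w) dw, where Υ(w) = (−w)∫_0^1 ρ_ℓ(w/σ) σ^{-m-1} dσ. That is, the difference between a function and its mollification can be written as the convolution of its gradient with the explicit kernel Υ. -/
open MeasureTheory

noncomputable def upsilonKernel (m : ℕ) (ρ : EuclideanSpace ℝ (Fin m) → ℝ) (ℓ : ℝ)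
    (w : EuclideanSpace ℝ (Fin m)) : EuclideanSpace ℝ (Fin m) :=
  (∫ σ in Set.Ioo (0 : ℝ) 1, ((ℓ ^ m)⁻¹ * ρ ((σ * ℓ)⁻¹ • w)) * σ ^ (-(m : ℝ) - 1)) • (-w)

set_option maxHeartbeats 4000000 in
/-- (f * ρ_ℓ)(x) − f(x) = ∫ Df(x − w) · Υ(w) dw for a C¹ map f
defined on a neighborhood of the closed ball B̄_ℓ(x). -/
theorem stmt_3 (m n : ℕ) (hm : 1 ≤ m) (ρ : EuclideanSpace ℝ (Fin m) → ℝ)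
    (hρ_smooth : ContDiff ℝ (⊤ : ℕ∞) ρ)
    (hρ_rad : ∀ x y : EuclideanSpace ℝ (Fin m), ‖x‖ = ‖y‖ → ρ x = ρ y)
    (hρ_supp : Function.support ρ ⊆ Metric.ball 0 1)
    (hρ_int : (∫ x : EuclideanSpace ℝ (Fin m), ρ x) = 1)
    (ℓ : ℝ) (hℓ : 0 < ℓ)
    (f : EuclideanSpace ℝ (Fin m) → EuclideanSpace ℝ (Fin n))
    (U : Set (EuclideanSpace ℝ (Fin m))) (hU : IsOpen U)
    (x : EuclideanSpace ℝ (Fin m)) (hxU : Metric.closedBall x ℓ ⊆ U)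
    (hf : ContDiffOn ℝ 1 f U) :
    (∫ y : EuclideanSpace ℝ (Fin m), ((ℓ ^ m)⁻¹ * ρ (ℓ⁻¹ • y)) • f (x - y)) - f x
      = ∫ w : EuclideanSpace ℝ (Fin m), fderiv ℝ f (x - w) (upsilonKernel m ρ ℓ w) := by
  have hfr : Module.finrank ℝ (EuclideanSpace ℝ (Fin m)) = m := finrank_euclideanSpace_fin
  have hℓm : (0:ℝ) < ℓ ^ m := pow_pos hℓ m
  set ρℓ : EuclideanSpace ℝ (Fin m) → ℝ := fun y => (ℓ ^ m)⁻¹ * ρ (ℓ⁻¹ • y) with hρℓ_def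
  have hρ_cont : Continuous ρ := hρ_smooth.continuous
  have hρℓ_cont : Continuous ρℓ :=
    continuous_const.mul (hρ_cont.comp (continuous_const_smul _))
  have hρ_zero : ∀ z : EuclideanSpace ℝ (Fin m), 1 ≤ ‖z‖ → ρ z = 0 := by
    intro z hz
    by_contra h
    have := hρ_supp (Function.mem_support.2 h)
    rw [Metric.mem_ball, dist_zero_right] at this
    linarith
  have hρℓ_zero : ∀ y : EuclideanSpace ℝ (Fin m), ℓ ≤ ‖y‖ → ρℓ y = 0 := by
    intro y hy
    have h1 : 1 ≤ ‖ℓ⁻¹ • y‖ := by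
      rw [norm_smul, Real.norm_eq_abs, abs_of_pos (inv_pos.2 hℓ)]
      rw [← inv_mul_cancel₀ hℓ.ne']
      exact mul_le_mul_of_nonneg_left hy (inv_pos.2 hℓ).le
    simp [hρℓ_def, hρ_zero _ h1]
  have hρℓ_supp : Function.support ρℓ ⊆ Metric.closedBall 0 ℓ := by
    intro y hy
    rw [Metric.mem_closedBall, dist_zero_right]
    by_contra h
    exact hy (hρℓ_zero y (le_of_lt (not_le.1 h)))
  have hρℓ_hcs : HasCompactSupport ρℓ :=
    HasCompactSupport.of_support_subset_isCompact (isCompact_closedBall 0 ℓ) hρℓ_supp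
  have hρℓ_int : (∫ y : EuclideanSpace ℝ (Fin m), ρℓ y) = 1 := by
    simp only [hρℓ_def]
    rw [MeasureTheory.integral_const_mul,
      MeasureTheory.Measure.integral_comp_inv_smul_of_nonneg volume ρ hℓ.le, hfr, hρ_int,
      smul_eq_mul, mul_one, inv_mul_cancel₀ hℓm.ne']
  -- membership helper
  have hballCB : ∀ (y : EuclideanSpace ℝ (Fin m)) (σ : ℝ), ‖y‖ ≤ ℓ → σ ∈ Set.Icc (0:ℝ) 1 →
      x - σ • y ∈ Metric.closedBall x ℓ := by
    intro y σ hy hσ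
    rw [Metric.mem_closedBall, dist_eq_norm,
      show x - σ • y - x = -(σ • y) from by abel, norm_neg, norm_smul, Real.norm_eq_abs,
      abs_of_nonneg hσ.1]
    calc σ * ‖y‖ ≤ 1 * ℓ := by
          apply mul_le_mul hσ.2 hy (norm_nonneg _) zero_le_one
      _ = ℓ := one_mul ℓ
  have hball : ∀ (y : EuclideanSpace ℝ (Fin m)) (σ : ℝ), ‖y‖ ≤ ℓ → σ ∈ Set.Icc (0:ℝ) 1 →
      x - σ • y ∈ U := fun y σ hy hσ => hxU (hballCB y σ hy hσ)
  have hdiff : ∀ z ∈ U, DifferentiableAt ℝ f z := fun z hz =>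
    (hf.differentiableOn one_ne_zero).differentiableAt (hU.mem_nhds hz)
  have hDfc : ContinuousOn (fderiv ℝ f) U := hf.continuousOn_fderiv_of_isOpen hU le_rfl
  have hDfca : ∀ z ∈ U, ContinuousAt (fderiv ℝ f) z := fun z hz =>
    hDfc.continuousAt (hU.mem_nhds hz)
  obtain ⟨C, hC⟩ := (isCompact_closedBall x ℓ).exists_bound_of_continuousOn (hDfc.mono hxU)
  have hC0 : 0 ≤ C := le_trans (norm_nonneg _) (hC x (Metric.mem_closedBall_self hℓ.le))
  obtain ⟨Cρ, hCρ⟩ := hρℓ_cont.bounded_above_of_compact_support hρℓ_hcs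
  -- continuity of the convolution integrand
  have hcont1 : Continuous (fun y : EuclideanSpace ℝ (Fin m) => ρℓ y • f (x - y)) := by
    rw [continuous_iff_continuousAt]
    intro y₀
    rcases le_or_gt ‖y₀‖ ℓ with hle | hlt
    · have hfy : ContinuousAt f (x - y₀) := by
        apply (hf.continuousOn.continuousAt (hU.mem_nhds _))
        apply hxU
        rw [Metric.mem_closedBall, dist_eq_norm,
          show x - y₀ - x = -y₀ from by abel, norm_neg]
        exact hle
      exact hρℓ_cont.continuousAt.smul (hfy.comp ((continuous_const.sub continuous_id).continuousAt))
    · have hev : (fun y => ρℓ y • f (x - y))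
          =ᶠ[nhds y₀] (fun _ => (0 : EuclideanSpace ℝ (Fin n))) := by
        have hopen : IsOpen {y : EuclideanSpace ℝ (Fin m) | ℓ < ‖y‖} :=
          isOpen_lt continuous_const continuous_norm
        filter_upwards [hopen.mem_nhds hlt] with y hy
        simp [hρℓ_zero y (le_of_lt hy)]
      exact continuousAt_const.congr hev.symm
  have hsupp1 : Function.support (fun y => ρℓ y • f (x - y)) ⊆ Metric.closedBall 0 ℓ := by
    intro y hy
    by_contra hcb
    rw [Metric.mem_closedBall, dist_zero_right, not_le] at hcb
    exact hy (by simp [hρℓ_zero y hcb.le])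
  have hInt1 : Integrable (fun y => ρℓ y • f (x - y)) volume :=
    hcont1.integrable_of_hasCompactSupport
      (HasCompactSupport.of_support_subset_isCompact (isCompact_closedBall 0 ℓ) hsupp1)
  have hInt2 : Integrable (fun y => ρℓ y • f x) volume :=
    (hρℓ_cont.integrable_of_hasCompactSupport hρℓ_hcs).smul_const (f x)
  have stepA : (∫ y, ρℓ y • f (x - y)) - f x = ∫ y, ρℓ y • (f (x - y) - f x) := by
    simp_rw [smul_sub]
    rw [integral_sub hInt1 hInt2, integral_smul_const, hρℓ_int, one_smul]
  set F : EuclideanSpace ℝ (Fin m) → ℝ → EuclideanSpace ℝ (Fin n) :=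
    fun y σ => ρℓ y • (fderiv ℝ f (x - σ • y)) y with hF_def
  have hB : ∀ y, ρℓ y • (f (x - y) - f x) = ∫ σ in Set.Ioo (0:ℝ) 1, -F y σ := by
    intro y
    by_cases hy : ρℓ y = 0
    · simp [hF_def, hy]
    · have hyℓ : ‖y‖ ≤ ℓ := by
        by_contra h
        exact hy (hρℓ_zero y (not_le.1 h).le)
      have hkey : ∀ σ ∈ Set.uIcc (0:ℝ) 1,
          HasDerivAt (fun σ : ℝ => f (x - σ • y)) (-(fderiv ℝ f (x - σ • y)) y) σ := by
        intro σ hσ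
        rw [Set.uIcc_of_le zero_le_one] at hσ
        have hmem : x - σ • y ∈ U := hball y σ hyℓ hσ
        have h1 : HasDerivAt (fun σ : ℝ => x - σ • y) (-y) σ := by
          simpa using ((hasDerivAt_id σ).smul_const y).const_sub x
        have h2 := (hdiff _ hmem).hasFDerivAt.comp_hasDerivAt σ h1
        rw [ContinuousLinearMap.map_neg] at h2
        exact h2
      have hcontD : ContinuousOn (fun σ : ℝ => -(fderiv ℝ f (x - σ • y)) y)
          (Set.uIcc (0:ℝ) 1) := by
        rw [Set.uIcc_of_le zero_le_one]
        apply ContinuousOn.neg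
        apply ContinuousOn.clm_apply _ continuousOn_const
        apply hDfc.comp
        · exact (continuous_const.sub (continuous_id.smul continuous_const)).continuousOn
        · intro σ hσ; exact hball y σ hyℓ hσ
      have hFTC := intervalIntegral.integral_eq_sub_of_hasDerivAt hkey
        hcontD.intervalIntegrable
      simp only [one_smul, zero_smul, sub_zero] at hFTC
      calc ρℓ y • (f (x - y) - f x)
          = ρℓ y • ∫ σ in (0:ℝ)..1, -(fderiv ℝ f (x - σ • y)) y := by rw [hFTC]
        _ = ∫ σ in (0:ℝ)..1, ρℓ y • -(fderiv ℝ f (x - σ • y)) y :=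
            (intervalIntegral.integral_smul _ _).symm
        _ = ∫ σ in Set.Ioc (0:ℝ) 1, ρℓ y • -(fderiv ℝ f (x - σ • y)) y :=
            intervalIntegral.integral_of_le zero_le_one
        _ = ∫ σ in Set.Ioo (0:ℝ) 1, ρℓ y • -(fderiv ℝ f (x - σ • y)) y :=
            integral_Ioc_eq_integral_Ioo
        _ = ∫ σ in Set.Ioo (0:ℝ) 1, -F y σ := by
            simp [hF_def, smul_neg]
  have hCρ0 : 0 ≤ Cρ := le_trans (norm_nonneg _) (hCρ 0)
  have hcontF : ∀ p : EuclideanSpace ℝ (Fin m) × ℝ, p.2 ∈ Set.Icc (0:ℝ) 1 →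
      ContinuousAt (fun q : EuclideanSpace ℝ (Fin m) × ℝ => F q.1 q.2) p := by
    intro p hp
    rcases le_or_gt ‖p.1‖ ℓ with hle | hlt
    · have hmem : x - p.2 • p.1 ∈ U := hball p.1 p.2 hle hp
      have hpath : Continuous (fun q : EuclideanSpace ℝ (Fin m) × ℝ => x - q.2 • q.1) :=
        continuous_const.sub (continuous_snd.smul continuous_fst)
      have hDf : ContinuousAt
          (fun q : EuclideanSpace ℝ (Fin m) × ℝ => fderiv ℝ f (x - q.2 • q.1)) p :=
        ContinuousAt.comp (hDfca _ hmem) hpath.continuousAt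
      have happ : ContinuousAt
          (fun q : EuclideanSpace ℝ (Fin m) × ℝ => (fderiv ℝ f (x - q.2 • q.1)) q.1) p :=
        hDf.clm_apply continuous_fst.continuousAt
      exact ((hρℓ_cont.comp continuous_fst).continuousAt).smul happ
    · have hev : (fun q : EuclideanSpace ℝ (Fin m) × ℝ => F q.1 q.2)
          =ᶠ[nhds p] (fun _ => (0 : EuclideanSpace ℝ (Fin n))) := by
        have hopen : IsOpen {q : EuclideanSpace ℝ (Fin m) × ℝ | ℓ < ‖q.1‖} :=
          isOpen_lt continuous_const (continuous_norm.comp continuous_fst)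
        filter_upwards [hopen.mem_nhds hlt] with q hq
        simp [hF_def, hρℓ_zero q.1 (le_of_lt hq)]
      exact continuousAt_const.congr hev.symm
  have hmeq : volume.prod (volume.restrict (Set.Ioo (0:ℝ) 1))
      = ((volume : Measure (EuclideanSpace ℝ (Fin m))).prod volume).restrict
          (Set.univ ×ˢ Set.Ioo (0:ℝ) 1) := by
    rw [← Measure.prod_restrict, Measure.restrict_univ]
  have hmeasF : AEStronglyMeasurable (Function.uncurry F)
      (volume.prod (volume.restrict (Set.Ioo (0:ℝ) 1))) := by
    rw [hmeq]
    apply ContinuousOn.aestronglyMeasurable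
    · intro p hp
      exact (hcontF p (Set.mem_Icc_of_Ioo hp.2)).continuousWithinAt
    · exact MeasurableSet.univ.prod measurableSet_Ioo
  have hIntF : Integrable (Function.uncurry F)
      (volume.prod (volume.restrict (Set.Ioo (0:ℝ) 1))) := by
    set g : EuclideanSpace ℝ (Fin m) × ℝ → ℝ :=
      (Metric.closedBall (0:EuclideanSpace ℝ (Fin m)) ℓ ×ˢ (Set.univ : Set ℝ)).indicator
        (fun _ => Cρ * (C * ℓ)) with hg_def
    have hgint : Integrable g (volume.prod (volume.restrict (Set.Ioo (0:ℝ) 1))) := by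
      rw [hg_def, integrable_indicator_iff (measurableSet_closedBall.prod MeasurableSet.univ)]
      refine integrableOn_const (ne_of_lt ?_)
      rw [Measure.prod_prod, Measure.restrict_apply_univ]
      exact ENNReal.mul_lt_top measure_closedBall_lt_top (by simp [Real.volume_Ioo])
    have hboundF : ∀ᵐ p ∂(volume.prod (volume.restrict (Set.Ioo (0:ℝ) 1))),
        ‖Function.uncurry F p‖ ≤ g p := by
      rw [hmeq]
      filter_upwards [ae_restrict_mem (MeasurableSet.univ.prod measurableSet_Ioo)] with p hp
      rcases le_or_gt ‖p.1‖ ℓ with hle | hlt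
      · have hgp : g p = Cρ * (C * ℓ) := Set.indicator_of_mem
          (Set.mem_prod.2 ⟨by rwa [Metric.mem_closedBall, dist_zero_right], Set.mem_univ _⟩) _
        rw [hgp]
        have hz : x - p.2 • p.1 ∈ Metric.closedBall x ℓ :=
          hballCB p.1 p.2 hle (Set.mem_Icc_of_Ioo hp.2)
        have h2 : ‖(fderiv ℝ f (x - p.2 • p.1)) p.1‖ ≤ C * ℓ :=
          le_trans (ContinuousLinearMap.le_opNorm _ _)
            (mul_le_mul (hC _ hz) hle (norm_nonneg _) hC0)
        calc ‖Function.uncurry F p‖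
            = ‖ρℓ p.1‖ * ‖(fderiv ℝ f (x - p.2 • p.1)) p.1‖ := norm_smul _ _
          _ ≤ Cρ * (C * ℓ) := mul_le_mul (hCρ _) h2 (norm_nonneg _) hCρ0
      · have hz : Function.uncurry F p = 0 := by
          simp [Function.uncurry, hF_def, hρℓ_zero p.1 hlt.le]
        rw [hz, norm_zero]
        exact Set.indicator_nonneg (fun _ _ => by positivity) p
    exact hgint.mono' hmeasF hboundF
  have stepC : (∫ y, ∫ σ in Set.Ioo (0:ℝ) 1, -F y σ)
      = ∫ σ in Set.Ioo (0:ℝ) 1, ∫ y, -F y σ :=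
    integral_integral_swap hIntF.neg
  set G : ℝ → EuclideanSpace ℝ (Fin m) → EuclideanSpace ℝ (Fin n) :=
    fun σ w => (ρℓ (σ⁻¹ • w) * ((σ ^ m)⁻¹ * σ⁻¹)) • (fderiv ℝ f (x - w)) w with hG_def
  have hGF : ∀ σ : ℝ, 0 < σ → ∀ w, G σ w = (σ ^ m : ℝ)⁻¹ • F (σ⁻¹ • w) σ := by
    intro σ hσ0 w
    have hw : σ • σ⁻¹ • w = w := smul_inv_smul₀ hσ0.ne' w
    rw [hG_def, hF_def]
    simp only [hw]
    rw [ContinuousLinearMap.map_smul, smul_smul, smul_smul]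
    congr 1
    ring
  have hcv : ∀ σ : ℝ, 0 < σ → ∀ φ : EuclideanSpace ℝ (Fin m) → EuclideanSpace ℝ (Fin n),
      (∫ w, φ (σ⁻¹ • w)) = (σ ^ m : ℝ) • ∫ y, φ y := by
    intro σ hσ0 φ
    rw [MeasureTheory.Measure.integral_comp_inv_smul_of_nonneg volume φ hσ0.le, hfr]
  have hD : ∀ σ ∈ Set.Ioo (0:ℝ) 1, (∫ y, F y σ) = ∫ w, G σ w := by
    intro σ hσ
    have hσ0 : (0:ℝ) < σ := hσ.1
    have hpm : (σ ^ m : ℝ) ≠ 0 := pow_ne_zero _ hσ0.ne'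
    calc (∫ y, F y σ)
        = (σ ^ m : ℝ)⁻¹ • ((σ ^ m : ℝ) • ∫ y, F y σ) := by
          rw [smul_smul, inv_mul_cancel₀ hpm, one_smul]
      _ = (σ ^ m : ℝ)⁻¹ • ∫ w, F (σ⁻¹ • w) σ := by
          rw [show (∫ w, F (σ⁻¹ • w) σ) = (σ ^ m : ℝ) • ∫ y, F y σ from
            hcv σ hσ0 (fun y => F y σ)]
      _ = ∫ w, (σ ^ m : ℝ)⁻¹ • F (σ⁻¹ • w) σ := (integral_smul _ _).symm
      _ = ∫ w, G σ w := by
          congr 1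
          funext w
          rw [hGF σ hσ0 w]
  have stepD : (∫ σ in Set.Ioo (0:ℝ) 1, ∫ y, -F y σ)
      = ∫ σ in Set.Ioo (0:ℝ) 1, ∫ w, -G σ w := by
    apply setIntegral_congr_fun measurableSet_Ioo
    intro σ hσ
    simp only [integral_neg]
    rw [hD σ hσ]
  -- slice properties
  have hFσc : ∀ σ ∈ Set.Icc (0:ℝ) 1, Continuous (fun y => F y σ) := by
    intro σ hσ
    rw [continuous_iff_continuousAt]
    intro y
    exact ContinuousAt.comp (f := fun y : EuclideanSpace ℝ (Fin m) => (y, σ))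
      (hcontF (y, σ) hσ) ((continuous_id.prodMk continuous_const).continuousAt)
  have hFσ_int : ∀ σ ∈ Set.Icc (0:ℝ) 1, Integrable (fun y => F y σ) volume := by
    intro σ hσ
    apply (hFσc σ hσ).integrable_of_hasCompactSupport
    apply HasCompactSupport.of_support_subset_isCompact (isCompact_closedBall 0 ℓ)
    intro y hy
    rw [Metric.mem_closedBall, dist_zero_right]
    by_contra h
    exact hy (by simp [hF_def, hρℓ_zero y (not_le.1 h).le])
  have hGσ_int : ∀ σ ∈ Set.Ioo (0:ℝ) 1, Integrable (G σ) volume := by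
    intro σ hσ
    have : G σ = fun w => (σ ^ m : ℝ)⁻¹ • F (σ⁻¹ • w) σ := funext (hGF σ hσ.1)
    rw [this]
    exact ((hFσ_int σ (Set.mem_Icc_of_Ioo hσ)).comp_smul (inv_ne_zero hσ.1.ne')).smul (σ ^ m : ℝ)⁻¹
  have hFbound : ∀ (y : EuclideanSpace ℝ (Fin m)) (σ : ℝ), σ ∈ Set.Icc (0:ℝ) 1 →
      ‖F y σ‖ ≤ Cρ * (C * ℓ) := by
    intro y σ hσ
    simp only [hF_def]
    rcases le_or_gt ‖y‖ ℓ with hle | hlt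
    · have hz : x - σ • y ∈ Metric.closedBall x ℓ := hballCB y σ hle hσ
      have h2 : ‖(fderiv ℝ f (x - σ • y)) y‖ ≤ C * ℓ :=
        le_trans (ContinuousLinearMap.le_opNorm _ _)
          (mul_le_mul (hC _ hz) hle (norm_nonneg _) hC0)
      calc ‖ρℓ y • (fderiv ℝ f (x - σ • y)) y‖
          = ‖ρℓ y‖ * ‖(fderiv ℝ f (x - σ • y)) y‖ := norm_smul _ _
        _ ≤ Cρ * (C * ℓ) := mul_le_mul (hCρ _) h2 (norm_nonneg _) hCρ0
    · rw [hρℓ_zero y hlt.le, zero_smul, norm_zero]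
      positivity
  have hcontG : ∀ p : ℝ × EuclideanSpace ℝ (Fin m), p.1 ∈ Set.Ioo (0:ℝ) 1 →
      ContinuousAt (fun q : ℝ × EuclideanSpace ℝ (Fin m) => G q.1 q.2) p := by
    intro p hp
    have hσ0 : (0:ℝ) < p.1 := hp.1
    rcases lt_or_ge ‖p.2‖ ℓ with hlt | hge
    · have hscal : ContinuousAt
          (fun q : ℝ × EuclideanSpace ℝ (Fin m) =>
            ρℓ (q.1⁻¹ • q.2) * ((q.1 ^ m)⁻¹ * q.1⁻¹)) p := by
        have h1 : ContinuousAt (fun q : ℝ × EuclideanSpace ℝ (Fin m) => q.1⁻¹ • q.2) p :=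
          (continuousAt_fst.inv₀ hσ0.ne').smul continuousAt_snd
        exact (ContinuousAt.comp hρℓ_cont.continuousAt h1).mul
          (((continuousAt_fst.pow m).inv₀ (pow_ne_zero m hσ0.ne')).mul
            (continuousAt_fst.inv₀ hσ0.ne'))
      have hmem : x - p.2 ∈ U := by
        apply hxU
        rw [Metric.mem_closedBall, dist_eq_norm,
          show x - p.2 - x = -p.2 from by abel, norm_neg]
        exact hlt.le
      have hDf : ContinuousAt
          (fun q : ℝ × EuclideanSpace ℝ (Fin m) => fderiv ℝ f (x - q.2)) p :=
        ContinuousAt.comp (hDfca _ hmem) (continuous_const.sub continuous_snd).continuousAt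
      have happ : ContinuousAt
          (fun q : ℝ × EuclideanSpace ℝ (Fin m) => (fderiv ℝ f (x - q.2)) q.2) p :=
        hDf.clm_apply continuous_snd.continuousAt
      exact hscal.smul happ
    · have hps : p.1 < (p.1 + 1) / 2 := by linarith [hp.2]
      have hsl : (p.1 + 1) / 2 * ℓ < ℓ := by nlinarith [hp.2, hℓ]
      have hev : (fun q : ℝ × EuclideanSpace ℝ (Fin m) => G q.1 q.2)
          =ᶠ[nhds p] (fun _ => (0 : EuclideanSpace ℝ (Fin n))) := by
        have hopen : IsOpen {q : ℝ × EuclideanSpace ℝ (Fin m) |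
            q.1 < (p.1 + 1) / 2 ∧ 0 < q.1 ∧ (p.1 + 1) / 2 * ℓ < ‖q.2‖} :=
          (isOpen_lt continuous_fst continuous_const).and
            ((isOpen_lt continuous_const continuous_fst).and
              (isOpen_lt continuous_const (continuous_norm.comp continuous_snd)))
        have hpmem : p ∈ {q : ℝ × EuclideanSpace ℝ (Fin m) |
            q.1 < (p.1 + 1) / 2 ∧ 0 < q.1 ∧ (p.1 + 1) / 2 * ℓ < ‖q.2‖} :=
          ⟨hps, hσ0, lt_of_lt_of_le hsl hge⟩
        filter_upwards [hopen.mem_nhds hpmem] with q hq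
        obtain ⟨hq1, hq0, hq2⟩ := hq
        have h3 : q.1 * ℓ ≤ ‖q.2‖ := by nlinarith
        have h4 : ℓ ≤ ‖q.1⁻¹ • q.2‖ := by
          rw [norm_smul, Real.norm_eq_abs, abs_of_pos (inv_pos.2 hq0)]
          calc ℓ = q.1⁻¹ * (q.1 * ℓ) := by field_simp
            _ ≤ q.1⁻¹ * ‖q.2‖ := mul_le_mul_of_nonneg_left h3 (inv_pos.2 hq0).le
        simp [hG_def, hρℓ_zero _ h4]
      exact continuousAt_const.congr hev.symm
  have hmeq2 : (volume.restrict (Set.Ioo (0:ℝ) 1)).prod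
        (volume : Measure (EuclideanSpace ℝ (Fin m)))
      = ((volume : Measure ℝ).prod (volume : Measure (EuclideanSpace ℝ (Fin m)))).restrict
          (Set.Ioo (0:ℝ) 1 ×ˢ Set.univ) := by
    rw [← Measure.prod_restrict, Measure.restrict_univ]
  have hGmeas : AEStronglyMeasurable (Function.uncurry G)
      ((volume.restrict (Set.Ioo (0:ℝ) 1)).prod volume) := by
    rw [hmeq2]
    apply ContinuousOn.aestronglyMeasurable
    · intro p hp
      exact (hcontG p hp.1).continuousWithinAt
    · exact measurableSet_Ioo.prod MeasurableSet.univ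
  have hIoo_fin : volume (Set.Ioo (0:ℝ) 1) < ⊤ := by simp [Real.volume_Ioo]
  have hcvR : ∀ σ : ℝ, 0 < σ → ∀ φ : EuclideanSpace ℝ (Fin m) → ℝ,
      (∫ w, φ (σ⁻¹ • w)) = (σ ^ m : ℝ) • ∫ y, φ y := by
    intro σ hσ0 φ
    rw [MeasureTheory.Measure.integral_comp_inv_smul_of_nonneg volume φ hσ0.le, hfr]
  have hIntG : Integrable (Function.uncurry G)
      ((volume.restrict (Set.Ioo (0:ℝ) 1)).prod volume) := by
    refine (integrable_prod_iff hGmeas).2 ⟨?_, ?_⟩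
    · filter_upwards [ae_restrict_mem measurableSet_Ioo] with σ hσ
      exact hGσ_int σ hσ
    · have hnormint : ∀ σ ∈ Set.Ioo (0:ℝ) 1, (∫ w, ‖G σ w‖)
          ≤ Cρ * (C * ℓ) * (volume (Metric.closedBall (0:EuclideanSpace ℝ (Fin m)) ℓ)).toReal := by
        intro σ hσ
        have hσ0 : (0:ℝ) < σ := hσ.1
        have h1 : (∫ w, ‖G σ w‖) = ∫ y, ‖F y σ‖ := by
          have he : (fun w => ‖G σ w‖)
              = fun w => (σ ^ m : ℝ)⁻¹ • ‖F (σ⁻¹ • w) σ‖ := by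
            funext w
            rw [hGF σ hσ0 w, norm_smul, Real.norm_eq_abs,
              abs_of_pos (inv_pos.2 (pow_pos hσ0 m)), smul_eq_mul]
          rw [he, integral_smul,
            show (∫ w, ‖F (σ⁻¹ • w) σ‖) = (σ ^ m : ℝ) • ∫ y, ‖F y σ‖ from
              hcvR σ hσ0 (fun y => ‖F y σ‖),
            smul_smul, inv_mul_cancel₀ (pow_ne_zero m hσ0.ne'), one_smul]
        have hvanish : ∀ y ∉ Metric.closedBall (0:EuclideanSpace ℝ (Fin m)) ℓ,
            ‖F y σ‖ = 0 := by
          intro y hy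
          rw [Metric.mem_closedBall, dist_zero_right, not_le] at hy
          simp [hF_def, hρℓ_zero y hy.le]
        have h2 : (∫ y, ‖F y σ‖)
            = ∫ y in Metric.closedBall (0:EuclideanSpace ℝ (Fin m)) ℓ, ‖F y σ‖ :=
          (setIntegral_eq_integral_of_forall_compl_eq_zero hvanish).symm
        have h3 := norm_setIntegral_le_of_norm_le_const
          (μ := (volume : Measure (EuclideanSpace ℝ (Fin m))))
          (s := Metric.closedBall 0 ℓ) (C := Cρ * (C * ℓ))
          (f := fun y => ‖F y σ‖) measure_closedBall_lt_top
          (fun y _ => by rw [norm_norm]; exact hFbound y σ (Set.mem_Icc_of_Ioo hσ))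
        rw [h1, h2]
        exact le_trans (le_abs_self _) (by rwa [Real.norm_eq_abs] at h3)
      have hms : AEStronglyMeasurable
          (fun σ => ∫ w, ‖Function.uncurry G (σ, w)‖)
          (volume.restrict (Set.Ioo (0:ℝ) 1)) := hGmeas.norm.integral_prod_right'
      apply Integrable.mono'
        (g := fun _ => Cρ * (C * ℓ) *
          (volume (Metric.closedBall (0:EuclideanSpace ℝ (Fin m)) ℓ)).toReal)
        (integrableOn_const hIoo_fin.ne) hms
      filter_upwards [ae_restrict_mem measurableSet_Ioo] with σ hσ
      rw [Real.norm_eq_abs, abs_of_nonneg (integral_nonneg (fun w => norm_nonneg _))]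
      exact hnormint σ hσ
  have stepE : (∫ σ in Set.Ioo (0:ℝ) 1, ∫ w, -G σ w)
      = ∫ w, ∫ σ in Set.Ioo (0:ℝ) 1, -G σ w :=
    integral_integral_swap hIntG.neg
  have final : ∀ w : EuclideanSpace ℝ (Fin m),
      (∫ σ in Set.Ioo (0:ℝ) 1, -G σ w)
        = fderiv ℝ f (x - w)
            ((∫ σ in Set.Ioo (0:ℝ) 1, ρℓ (σ⁻¹ • w) * ((σ ^ m)⁻¹ * σ⁻¹)) • (-w)) := by
    intro w
    rw [ContinuousLinearMap.map_smul, ContinuousLinearMap.map_neg]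
    calc (∫ σ in Set.Ioo (0:ℝ) 1, -G σ w)
        = -∫ σ in Set.Ioo (0:ℝ) 1, G σ w := integral_neg _
      _ = -((∫ σ in Set.Ioo (0:ℝ) 1, ρℓ (σ⁻¹ • w) * ((σ ^ m)⁻¹ * σ⁻¹)) •
            (fderiv ℝ f (x - w)) w) := by
          rw [hG_def, integral_smul_const]
      _ = (∫ σ in Set.Ioo (0:ℝ) 1, ρℓ (σ⁻¹ • w) * ((σ ^ m)⁻¹ * σ⁻¹)) •
            -(fderiv ℝ f (x - w)) w := by rw [smul_neg]
  have hker : ∀ w : EuclideanSpace ℝ (Fin m),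
      (∫ σ in Set.Ioo (0:ℝ) 1, ρℓ (σ⁻¹ • w) * ((σ ^ m)⁻¹ * σ⁻¹)) • (-w)
        = upsilonKernel m ρ ℓ w := by
    intro w
    rw [upsilonKernel]
    congr 1
    apply setIntegral_congr_fun measurableSet_Ioo
    intro σ hσ
    have hσ0 : (0:ℝ) < σ := hσ.1
    have hpow : σ ^ (-(m:ℝ) - 1) = (σ ^ m)⁻¹ * σ⁻¹ := by
      rw [show (-(m:ℝ) - 1) = -((m:ℝ) + 1) by ring, Real.rpow_neg hσ0.le,
        show ((m:ℝ) + 1) = ((m + 1 : ℕ) : ℝ) by push_cast; ring,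
        Real.rpow_natCast, pow_succ, mul_inv]
    have hsm : ℓ⁻¹ • σ⁻¹ • w = (σ * ℓ)⁻¹ • w := by
      rw [smul_smul, mul_inv_rev]
    simp only [hρℓ_def, hsm, hpow]
  calc (∫ y, ρℓ y • f (x - y)) - f x
      = ∫ y, ρℓ y • (f (x - y) - f x) := stepA
    _ = ∫ y, ∫ σ in Set.Ioo (0:ℝ) 1, -F y σ :=
        integral_congr_ae (Filter.Eventually.of_forall hB)
    _ = ∫ σ in Set.Ioo (0:ℝ) 1, ∫ y, -F y σ := stepC
    _ = ∫ σ in Set.Ioo (0:ℝ) 1, ∫ w, -G σ w := stepD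
    _ = ∫ w, ∫ σ in Set.Ioo (0:ℝ) 1, -G σ w := stepE
    _ = ∫ w, fderiv ℝ f (x - w) (upsilonKernel m ρ ℓ w) := by
        apply integral_congr_ae (Filter.Eventually.of_forall _)
        intro w
        rw [final w, hker w]
end

section
/- Isoperimetric dichotomy: Let B ⊂ ℝ^m be an open ball and J ⊂ B an open set with ℋ^{m−1}(∂J ∩ B) = 0. Then either |J ∩ B| = 0 or |B \ J| = 0. In particular, if J is nonempty and open, then |B \ J| = 0, and hence the closure of J contains B. -/
/-!
If `q ∈ B` lies outside `closure J` and `p ∈ J`, translate a small ball around `q` by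
`v = p - q` into `J`. Each segment from a point `a` of the ball to `a + v` runs inside the
convex set `B` from outside `J` into `J`, so it meets `frontier J ∩ B`. Hence the orthogonal
projection onto `vᗮ` maps `frontier J ∩ B` onto a set containing the projection of the ball,
an open subset of an `(m - 1)`-dimensional space. Projections are `1`-Lipschitz, so this open
set would be `ℋ^{m-1}`-null, which is absurd. Thus `B ⊆ closure J`, and `B \ J` lies in the
Lebesgue-null set `frontier J ∩ B`.
-/

open MeasureTheory Metric Set Module

theorem IsPreconnected.inter_frontier_nonempty {X : Type*} [TopologicalSpace X] {s t : Set X}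
    (hs : IsPreconnected s) (hst : (s ∩ t).Nonempty) (hst' : (s \ t).Nonempty) :
    (s ∩ frontier t).Nonempty := by
  by_contra h
  have hcover : s ⊆ interior t ∪ (closure t)ᶜ := fun x hx => by
    by_contra hx'
    simp only [mem_union, mem_compl_iff, not_or, not_not] at hx'
    exact h ⟨x, hx, hx'.2, hx'.1⟩
  rcases hs.subset_or_subset isOpen_interior isClosed_closure.isOpen_compl
      (disjoint_compl_right.mono_left interior_subset_closure) hcover with hint | hext
  · obtain ⟨x, hxs, hxt⟩ := hst'
    exact hxt (interior_subset (hint hxs))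
  · obtain ⟨x, hxs, hxt⟩ := hst
    exact hext hxs (subset_closure hxt)

section

variable {E : Type*} [NormedAddCommGroup E]

theorem Convex.exists_add_smul_mem_frontier_inter [NormedSpace ℝ E] {B J : Set E}
    (hB : Convex ℝ B) {a v : E} (ha : a ∈ B \ J) (hav : a + v ∈ J ∩ B) :
    ∃ t : ℝ, a + t • v ∈ frontier J ∩ B := by
  obtain ⟨y, hyS, hyJ⟩ :=
    (convex_segment a (a + v)).isPreconnected.inter_frontier_nonempty
      ⟨a + v, right_mem_segment ℝ a (a + v), hav.1⟩
      ⟨a, left_mem_segment ℝ a (a + v), ha.2⟩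
  have hyB : y ∈ B := hB.segment_subset ha.1 hav.2 hyS
  rw [segment_eq_image', add_sub_cancel_left] at hyS
  obtain ⟨t, -, rfl⟩ := hyS
  exact ⟨t, hyJ, hyB⟩

theorem addHaar_eq_zero_of_hausdorffMeasure_eq_zero [NormedSpace ℝ E] [FiniteDimensional ℝ E]
    [MeasurableSpace E] [BorelSpace E] (μ : Measure E) [μ.IsAddHaarMeasure] {d : ℝ}
    (hd : d ≤ finrank ℝ E) {s : Set E} (hs : μH[d] s = 0) : μ s = 0 :=
  Measure.absolutelyContinuous_isAddHaarMeasure μ μH[finrank ℝ E]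
    (le_zero_iff.mp (hs ▸ Measure.hausdorffMeasure_mono hd s))

variable [InnerProductSpace ℝ E] [FiniteDimensional ℝ E] [MeasurableSpace E] [BorelSpace E]

theorem Convex.subset_closure_of_hausdorffMeasure_frontier_inter_eq_zero {n : ℕ}
    (hn : finrank ℝ E = n + 1) {B J : Set E} (hBo : IsOpen B) (hBc : Convex ℝ B)
    (hJo : IsOpen J) (hJB : J ⊆ B) (hJ : J.Nonempty) (h : μH[n] (frontier J ∩ B) = 0) :
    B ⊆ closure J := by
  by_contra hsub
  obtain ⟨q, hqB, hqJ⟩ := not_subset.mp hsub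
  obtain ⟨p, hpJ⟩ := hJ
  obtain ⟨ε₁, hε₁, hq⟩ := isOpen_iff.mp (hBo.sdiff isClosed_closure) q ⟨hqB, hqJ⟩
  obtain ⟨ε₂, hε₂, hp⟩ := isOpen_iff.mp hJo p hpJ
  set ε := min ε₁ ε₂
  have hqε : ball q ε ⊆ B \ closure J := (ball_subset_ball (min_le_left _ _)).trans hq
  have hpε : ball p ε ⊆ J := (ball_subset_ball (min_le_right _ _)).trans hp
  set v := p - q
  have hv : v ≠ 0 := sub_ne_zero.mpr fun hpq => hqJ (hpq ▸ subset_closure hpJ)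
  set K := (ℝ ∙ v)ᗮ
  have hK : finrank ℝ K = n :=
    Submodule.finrank_add_finrank_orthogonal' (by rw [finrank_span_singleton hv, hn, add_comm])
  set P := K.orthogonalProjectionOnto
  have hP : Function.Surjective P := fun w =>
    ⟨w, K.orthogonalProjectionOnto_mem_subspace_eq_self w⟩
  have himage : P '' ball q ε ⊆ P '' (frontier J ∩ B) := by
    rintro _ ⟨a, ha, rfl⟩
    have hav : a + v ∈ ball p ε := by
      have hshift : a + v - p = a - q := by simp only [v]; abel
      rwa [mem_ball, dist_eq_norm, hshift, ← dist_eq_norm]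
    obtain ⟨t, ht⟩ := hBc.exists_add_smul_mem_frontier_inter
      ⟨(hqε ha).1, fun haJ => (hqε ha).2 (subset_closure haJ)⟩ ⟨hpε hav, hJB (hpε hav)⟩
    refine ⟨a + t • v, ht, ?_⟩
    simp [P, K, Submodule.orthogonalProjectionOnto_orthogonalComplement_singleton_eq_zero]
  have hpos : 0 < μH[(n : ℝ)] (P '' ball q ε) := by
    rw [← hK]
    exact (P.isOpenMap hP _ isOpen_ball).measure_pos _
      ((nonempty_ball.mpr (lt_min hε₁ hε₂)).image P)
  have hnull : μH[(n : ℝ)] (P '' (frontier J ∩ B)) = 0 :=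
    le_zero_iff.mp (h ▸ hausdorffMeasure_orthogonalProjectionOnto_le K n _ n.cast_nonneg)
  exact hpos.ne' (measure_mono_null himage hnull)

end

theorem stmt_16_general (m : ℕ) (hm : 1 ≤ m)
    (x₀ : EuclideanSpace ℝ (Fin m)) (R : ℝ)
    (J : Set (EuclideanSpace ℝ (Fin m)))
    (hJo : IsOpen J) (hJB : J ⊆ Metric.ball x₀ R)
    (hfr : μH[(m : ℝ) - 1] (frontier J ∩ Metric.ball x₀ R) = 0) :
    (volume J = 0 ∨ volume (Metric.ball x₀ R \ J) = 0) ∧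
    (J.Nonempty → volume (Metric.ball x₀ R \ J) = 0 ∧ Metric.ball x₀ R ⊆ closure J) := by
  have hdim : finrank ℝ (EuclideanSpace ℝ (Fin m)) = (m - 1) + 1 := by
    rw [finrank_euclideanSpace_fin]; omega
  have hfr' : μH[((m - 1 : ℕ) : ℝ)] (frontier J ∩ ball x₀ R) = 0 := by
    rwa [Nat.cast_sub hm, Nat.cast_one]
  have hvol : volume (frontier J ∩ ball x₀ R) = 0 :=
    addHaar_eq_zero_of_hausdorffMeasure_eq_zero volume (by simp) hfr
  have hdense (hJ : J.Nonempty) : volume (ball x₀ R \ J) = 0 ∧ ball x₀ R ⊆ closure J := by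
    have hcl := (convex_ball x₀ R).subset_closure_of_hausdorffMeasure_frontier_inter_eq_zero
      hdim isOpen_ball hJo hJB hJ hfr'
    have hdiff : ball x₀ R \ J ⊆ frontier J ∩ ball x₀ R := fun y hy =>
      ⟨hJo.frontier_eq ▸ ⟨hcl hy.1, hy.2⟩, hy.1⟩
    exact ⟨measure_mono_null hdiff hvol, hcl⟩
  refine ⟨?_, hdense⟩
  rcases J.eq_empty_or_nonempty with rfl | hJ
  · exact Or.inl measure_empty
  · exact Or.inr (hdense hJ).1

/-- isoperimetric dichotomy.  If J is an open subset of a ball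
B ⊂ ℝ^m with ℋ^{m−1}(∂J ∩ B) = 0, then either |J| = 0 or |B \ J| = 0; in
particular if J is nonempty then |B \ J| = 0 and B ⊆ closure J. -/
theorem stmt_16 (m : ℕ) (hm : 1 ≤ m)
    (x₀ : EuclideanSpace ℝ (Fin m)) (R : ℝ) (hR : 0 < R)
    (J : Set (EuclideanSpace ℝ (Fin m)))
    (hJo : IsOpen J) (hJB : J ⊆ Metric.ball x₀ R)
    (hfr : μH[(m : ℝ) - 1] (frontier J ∩ Metric.ball x₀ R) = 0) :
    (volume J = 0 ∨ volume (Metric.ball x₀ R \ J) = 0) ∧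
    (J.Nonempty → volume (Metric.ball x₀ R \ J) = 0 ∧ Metric.ball x₀ R ⊆ closure J) :=
  stmt_16_general m hm x₀ R J hJo hJB hfr
end
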